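/- There is a constant c > 0 such that for every integer m ≥ 1 and every θ ∈ [−π/2, 5π/2] with |θ − w| ≥ 2·3^{−40m} for all w ∈ W, the discrepancy d_θ := inf_{Y ∈ ℝ} max( | e^{−Y·b(θ)} · |a(θ)+b(θ)| / |a(θ)| − 1 | , | e^{Y·a(θ)} · |a(θ)+b(θ)| / |b(θ)| − 1 | ) satisfies d_θ ≥ c · 3^{−40m}. -/
import Mathlib

open Real

/-- Core convexity-type inequality for positive reals. -/
lemma core_pos {a b : ℝ} (ha : 0 < a) (hb : 0 < b) :
    Real.log 2 * min a b ≤ (a + b) * Real.log (a + b) - a * Real.log a - b * Real.log b := by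
  have key : ∀ x y : ℝ, 0 < x → 0 < y → x ≤ y →
      Real.log 2 * x ≤ (x + y) * Real.log (x + y) - x * Real.log x - y * Real.log y := by
    intro x y hx hy hxy
    have hxy0 : 0 < x + y := by linarith
    have h1 : Real.log 2 ≤ Real.log (x + y) - Real.log x := by
      rw [← Real.log_div (ne_of_gt hxy0) (ne_of_gt hx)]
      apply Real.log_le_log (by norm_num)
      rw [le_div_iff₀ hx]; linarith
    have h2 : Real.log y ≤ Real.log (x + y) := Real.log_le_log hy (by linarith)
    nlinarith [mul_le_mul_of_nonneg_left h1 hx.le, mul_le_mul_of_nonneg_left h2 hy.le]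
  rcases le_total a b with h | h
  · simpa [min_eq_left h] using key a b ha hb h
  · have := key b a hb ha h
    rw [add_comm b a] at this
    rw [min_eq_right h]; linarith [this]

/-- General sign version with absolute values. -/
lemma core_abs {a b : ℝ} (ha : a ≠ 0) (hb : b ≠ 0) (hs : a + b ≠ 0) :
    Real.log 2 * min |a| (min |b| |a + b|) ≤
      |(a + b) * Real.log (a + b) - a * Real.log a - b * Real.log b| := by
  have hmin3 : ∀ x ∈ ({|a|, |b|, |a+b|} : Set ℝ), min |a| (min |b| |a+b|) ≤ x := by
    intro x hx
    rcases hx with h | h | h <;> subst h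
    · exact min_le_left _ _
    · exact le_trans (min_le_right _ _) (min_le_left _ _)
    · exact le_trans (min_le_right _ _) (min_le_right _ _)
  have hlog2 : (0:ℝ) < Real.log 2 := Real.log_pos (by norm_num)
  -- helper to upgrade: if log2 * min x y ≤ v  and min3 ≤ min x y then log2*min3 ≤ |v| when v ≥ ... use le_abs
  rcases lt_or_gt_of_ne ha with ha' | ha' <;> rcases lt_or_gt_of_ne hb with hb' | hb'
  · -- a<0, b<0, s<0
    have hs' : a + b < 0 := by linarith
    have := core_pos (a := -a) (b := -b) (by linarith) (by linarith)
    rw [← neg_add] at this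
    rw [Real.log_neg_eq_log, Real.log_neg_eq_log, Real.log_neg_eq_log] at this
    rw [abs_of_neg ha', abs_of_neg hb', abs_of_neg hs']
    refine le_trans ?_ (neg_le_abs _)
    calc Real.log 2 * min (-a) (min (-b) (-(a+b))) ≤ Real.log 2 * min (-a) (-b) := by
          apply mul_le_mul_of_nonneg_left _ hlog2.le
          exact min_le_min le_rfl (min_le_left _ _)
      _ ≤ -((a + b) * Real.log (a + b) - a * Real.log a - b * Real.log b) := by linarith [this]
  · -- a<0, b>0
    rcases lt_or_gt_of_ne hs with hs' | hs'
    · -- s<0 : b = (-s) + ... : apply core_pos to (b, -(a+b)) with sum -a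
      have h := core_pos (a := b) (b := -(a+b)) hb' (by linarith)
      have he : b + -(a+b) = -a := by ring
      rw [he, Real.log_neg_eq_log, Real.log_neg_eq_log] at h
      rw [abs_of_neg ha', abs_of_pos hb', abs_of_neg hs']
      refine le_trans ?_ (le_abs_self _)
      calc Real.log 2 * min (-a) (min b (-(a+b))) ≤ Real.log 2 * min b (-(a+b)) := by
            apply mul_le_mul_of_nonneg_left (min_le_right _ _) hlog2.le
        _ ≤ (a + b) * Real.log (a + b) - a * Real.log a - b * Real.log b := by linarith [h]
    · -- s>0 : apply core_pos to (a+b, -a) with sum b; get ≤ -F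
      have h := core_pos (a := a+b) (b := -a) hs' (by linarith)
      have he : (a+b) + -a = b := by ring
      rw [he, Real.log_neg_eq_log] at h
      rw [abs_of_neg ha', abs_of_pos hb', abs_of_pos hs']
      refine le_trans ?_ (neg_le_abs _)
      calc Real.log 2 * min (-a) (min b (a+b)) ≤ Real.log 2 * min (a+b) (-a) := by
            apply mul_le_mul_of_nonneg_left _ hlog2.le
            apply le_min (le_trans (min_le_right _ _) (min_le_right _ _)) (min_le_left _ _)
        _ ≤ -((a + b) * Real.log (a + b) - a * Real.log a - b * Real.log b) := by linarith [h]
  · -- a>0, b<0 : symmetric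
    rcases lt_or_gt_of_ne hs with hs' | hs'
    · have h := core_pos (a := a) (b := -(a+b)) ha' (by linarith)
      have he : a + -(a+b) = -b := by ring
      rw [he, Real.log_neg_eq_log, Real.log_neg_eq_log] at h
      rw [abs_of_pos ha', abs_of_neg hb', abs_of_neg hs']
      refine le_trans ?_ (le_abs_self _)
      calc Real.log 2 * min a (min (-b) (-(a+b))) ≤ Real.log 2 * min a (-(a+b)) := by
            apply mul_le_mul_of_nonneg_left _ hlog2.le
            exact min_le_min le_rfl (min_le_right _ _)
        _ ≤ (a + b) * Real.log (a + b) - a * Real.log a - b * Real.log b := by linarith [h]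
    · have h := core_pos (a := a+b) (b := -b) hs' (by linarith)
      have he : (a+b) + -b = a := by ring
      rw [he, Real.log_neg_eq_log] at h
      rw [abs_of_pos ha', abs_of_neg hb', abs_of_pos hs']
      refine le_trans ?_ (neg_le_abs _)
      calc Real.log 2 * min a (min (-b) (a+b)) ≤ Real.log 2 * min (a+b) (-b) := by
            apply mul_le_mul_of_nonneg_left _ hlog2.le
            apply le_min (le_trans (min_le_right _ _) (min_le_right _ _))
              (le_trans (min_le_right _ _) (min_le_left _ _))
        _ ≤ -((a + b) * Real.log (a + b) - a * Real.log a - b * Real.log b) := by linarith [h]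
  · -- a>0, b>0
    have hs' : 0 < a + b := by linarith
    have h := core_pos ha' hb'
    rw [abs_of_pos ha', abs_of_pos hb', abs_of_pos hs']
    refine le_trans ?_ (le_abs_self _)
    calc Real.log 2 * min a (min b (a+b)) ≤ Real.log 2 * min a b := by
          apply mul_le_mul_of_nonneg_left _ hlog2.le
          exact min_le_min le_rfl (min_le_left _ _)
      _ ≤ _ := h

/-- `|log x| ≤ 2|x-1|` for `x ≥ 1/2`. -/
lemma abs_log_le {x : ℝ} (hx : 1/2 ≤ x) : |Real.log x| ≤ 2 * |x - 1| := by
  have hx0 : 0 < x := by linarith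
  rcases le_total 1 x with h | h
  · rw [abs_of_nonneg (Real.log_nonneg h), abs_of_nonneg (by linarith)]
    have := Real.log_le_sub_one_of_pos hx0
    linarith
  · rw [abs_of_nonpos (Real.log_nonpos hx0.le h), abs_of_nonpos (by linarith)]
    have h2 : Real.log x⁻¹ ≤ x⁻¹ - 1 := Real.log_le_sub_one_of_pos (by positivity)
    rw [Real.log_inv] at h2
    have h3 : x⁻¹ - 1 = (1 - x)/x := by field_simp
    rw [h3] at h2
    have h4 : (1-x)/x ≤ 2*(1-x) := by
      rw [div_le_iff₀ hx0]
      nlinarith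
    linarith

/-- sine lower bound away from multiples of π. -/
lemma sin_lb {x δ : ℝ} (hδ : 0 < δ) (h : ∀ k : ℤ, 2*δ ≤ |x - k*Real.pi|) : δ ≤ |Real.sin x| := by
  set k := round (x / Real.pi) with hk
  set r := x - k * Real.pi with hr
  have hpi := Real.pi_pos
  have hrle : |r| ≤ Real.pi/2 := by
    have h1 : |x/Real.pi - k| ≤ 1/2 := abs_sub_round (x/Real.pi)
    have h2 : r = Real.pi * (x/Real.pi - k) := by field_simp [hr]; ring
    rw [h2, abs_mul, abs_of_pos hpi]
    calc Real.pi * |x/Real.pi - k| ≤ Real.pi * (1/2) := by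
          exact mul_le_mul_of_nonneg_left h1 hpi.le
      _ = Real.pi/2 := by ring
  have hrge : 2*δ ≤ |r| := h k
  have hsin : |Real.sin x| = |Real.sin r| := by
    have : x = r + k * Real.pi := by rw [hr]; ring
    have h1 : |((-1:ℝ)) ^ k| = 1 := by
      rcases Int.even_or_odd k with he | ho
      · rw [he.neg_one_zpow, abs_one]
      · rw [ho.neg_one_zpow, abs_neg, abs_one]
    rw [this, Real.sin_add_int_mul_pi, abs_mul, h1, one_mul]
  rw [hsin]
  have habs : |Real.sin r| = Real.sin |r| := by
    rcases le_total 0 r with h' | h'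
    · rw [abs_of_nonneg h', abs_of_nonneg (Real.sin_nonneg_of_nonneg_of_le_pi h' (by linarith [abs_of_nonneg h', hrle]))]
    · rw [abs_of_nonpos h', Real.sin_neg, abs_of_nonpos]
      apply Real.sin_nonpos_of_nonpos_of_neg_pi_le h'
      have : |r| = -r := abs_of_nonpos h'
      linarith [hrle]
  rw [habs]
  have := Real.mul_le_sin (abs_nonneg r) hrle
  have hpi4 : Real.pi ≤ 4 := by linarith [Real.pi_le_four]
  calc δ ≤ 2/Real.pi * (2*δ) := by
        rw [div_mul_eq_mul_div, le_div_iff₀ hpi]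
        nlinarith
    _ ≤ 2/Real.pi * |r| := by
        apply mul_le_mul_of_nonneg_left hrge (by positivity)
    _ ≤ Real.sin |r| := this

lemma keyY {A B δ : ℝ} (hA : δ ≤ |A|) (hB : δ ≤ |B|) (hS : δ ≤ |A + B|)
    (hA1 : |A| ≤ 1) (hB1 : |B| ≤ 1) (hδ0 : 0 < δ) (Y : ℝ) :
    Real.log 2 / 4 * δ ≤ max |Real.exp (-(Y * B)) * (|A + B| / |A|) - 1|
      |Real.exp (Y * A) * (|A + B| / |B|) - 1| := by
  have hAne : A ≠ 0 := abs_pos.mp (lt_of_lt_of_le hδ0 hA)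
  have hBne : B ≠ 0 := abs_pos.mp (lt_of_lt_of_le hδ0 hB)
  have hSne : A + B ≠ 0 := abs_pos.mp (lt_of_lt_of_le hδ0 hS)
  have hApos : 0 < |A| := lt_of_lt_of_le hδ0 hA
  have hBpos : 0 < |B| := lt_of_lt_of_le hδ0 hB
  have hSpos : 0 < |A + B| := lt_of_lt_of_le hδ0 hS
  have hlog2pos : (0:ℝ) < Real.log 2 := Real.log_pos (by norm_num)
  have hlog2le : Real.log 2 ≤ 1 := by
    have := Real.log_le_sub_one_of_pos (x := 2) (by norm_num); linarith
  set f := Real.exp (-(Y * B)) * (|A + B| / |A|) with hfdef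
  set g := Real.exp (Y * A) * (|A + B| / |B|) with hgdef
  set M := max |f - 1| |g - 1| with hMdef
  have hM0 : 0 ≤ M := le_trans (abs_nonneg _) (le_max_left _ _)
  by_cases hc : 1/2 ≤ M
  · have hδ1 : δ ≤ 1 := le_trans hA hA1
    nlinarith
  · push_neg at hc
    have hf : |f - 1| ≤ M := le_max_left _ _
    have hg : |g - 1| ≤ M := le_max_right _ _
    have hfhalf : 1/2 ≤ f := by
      have := abs_lt.mp (lt_of_le_of_lt hf hc); linarith [this.1]
    have hghalf : 1/2 ≤ g := by
      have := abs_lt.mp (lt_of_le_of_lt hg hc); linarith [this.1]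
    have hlf : |Real.log f| ≤ 2 * M := le_trans (abs_log_le hfhalf) (by linarith)
    have hlg : |Real.log g| ≤ 2 * M := le_trans (abs_log_le hghalf) (by linarith)
    have hlogf : Real.log f = -(Y * B) + (Real.log (A + B) - Real.log A) := by
      rw [hfdef, Real.log_mul (Real.exp_ne_zero _) (ne_of_gt (div_pos hSpos hApos)),
        Real.log_exp, Real.log_div (ne_of_gt hSpos) (ne_of_gt hApos), Real.log_abs,
        Real.log_abs]
    have hlogg : Real.log g = Y * A + (Real.log (A + B) - Real.log B) := by
      rw [hgdef, Real.log_mul (Real.exp_ne_zero _) (ne_of_gt (div_pos hSpos hBpos)),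
        Real.log_exp, Real.log_div (ne_of_gt hSpos) (ne_of_gt hBpos), Real.log_abs,
        Real.log_abs]
    have hFid : (A + B) * Real.log (A + B) - A * Real.log A - B * Real.log B
        = A * Real.log f + B * Real.log g := by
      rw [hlogf, hlogg]; ring
    have hcore := core_abs hAne hBne hSne
    have hmin : δ ≤ min |A| (min |B| |A + B|) := le_min hA (le_min hB hS)
    have hbound : |A * Real.log f + B * Real.log g| ≤ 4 * M := by
      calc |A * Real.log f + B * Real.log g| ≤ |A * Real.log f| + |B * Real.log g| :=
            abs_add_le _ _
        _ = |A| * |Real.log f| + |B| * |Real.log g| := by rw [abs_mul, abs_mul]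
        _ ≤ 1 * (2 * M) + 1 * (2 * M) := by gcongr
        _ = 4 * M := by ring
    have h1 : Real.log 2 * δ ≤ 4 * M := by
      calc Real.log 2 * δ ≤ Real.log 2 * min |A| (min |B| |A + B|) :=
            mul_le_mul_of_nonneg_left hmin hlog2pos.le
        _ ≤ |(A + B) * Real.log (A + B) - A * Real.log A - B * Real.log B| := hcore
        _ = |A * Real.log f + B * Real.log g| := by rw [hFid]
        _ ≤ 4 * M := hbound
    linarith
noncomputable def aF (θ : ℝ) : ℝ := Real.sin (θ - Real.pi / 6)
noncomputable def bF (θ : ℝ) : ℝ := Real.sin (θ - 5 * Real.pi / 6)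

/-- The exceptional set `W = {kπ + π/6, kπ + π/2, kπ + 5π/6 : k ∈ ℤ}`. -/
def Wset : Set ℝ :=
  {w : ℝ | ∃ k : ℤ, w = k * Real.pi + Real.pi / 6 ∨ w = k * Real.pi + Real.pi / 2 ∨
    w = k * Real.pi + 5 * Real.pi / 6}

/-- Lower bound for the discrepancy: if `θ ∈ [−π/2, 5π/2]` stays `2·3^{−40m}` away
from `W`, then `d_θ ≥ c·3^{−40m}`. -/
theorem discrepancy_lower_bound :
    ∃ c > (0 : ℝ), ∀ m : ℕ, 1 ≤ m →
      ∀ θ ∈ Set.Icc (-(Real.pi / 2)) (5 * Real.pi / 2),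
        (∀ w ∈ Wset, 2 * (3 : ℝ) ^ (-(40 * (m : ℤ))) ≤ |θ - w|) →
        c * (3 : ℝ) ^ (-(40 * (m : ℤ))) ≤
          ⨅ Y : ℝ, max
            |Real.exp (-(Y * bF θ)) * (|aF θ + bF θ| / |aF θ|) - 1|
            |Real.exp (Y * aF θ) * (|aF θ + bF θ| / |bF θ|) - 1| := by
  refine ⟨Real.log 2 / 4, div_pos (Real.log_pos (by norm_num)) (by norm_num), ?_⟩
  intro m hm θ hθ hW
  set δ : ℝ := (3 : ℝ) ^ (-(40 * (m : ℤ))) with hδdef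
  have hδ0 : 0 < δ := by positivity
  have hA : δ ≤ |aF θ| := by
    rw [aF]
    apply sin_lb hδ0
    intro k
    have h := hW ((k : ℝ) * Real.pi + Real.pi / 6) ⟨k, Or.inl rfl⟩
    have he : θ - ((k : ℝ) * Real.pi + Real.pi / 6) = θ - Real.pi / 6 - (k : ℝ) * Real.pi := by
      ring
    rw [he] at h
    exact h
  have hB : δ ≤ |bF θ| := by
    rw [bF]
    apply sin_lb hδ0
    intro k
    have h := hW ((k : ℝ) * Real.pi + 5 * Real.pi / 6) ⟨k, Or.inr (Or.inr rfl)⟩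
    have he : θ - ((k : ℝ) * Real.pi + 5 * Real.pi / 6)
        = θ - 5 * Real.pi / 6 - (k : ℝ) * Real.pi := by ring
    rw [he] at h
    exact h
  have hid : aF θ + bF θ = Real.sin (θ - Real.pi / 2) := by
    rw [aF, bF]
    have h5 : 5 * Real.pi / 6 = Real.pi - Real.pi / 6 := by ring
    rw [h5, Real.sin_sub θ, Real.sin_sub θ, Real.sin_sub θ, Real.sin_pi_sub,
      Real.cos_pi_sub, Real.sin_pi_div_two, Real.cos_pi_div_two, Real.sin_pi_div_six]
    ring
  have hS : δ ≤ |aF θ + bF θ| := by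
    rw [hid]
    apply sin_lb hδ0
    intro k
    have h := hW ((k : ℝ) * Real.pi + Real.pi / 2) ⟨k, Or.inr (Or.inl rfl)⟩
    have he : θ - ((k : ℝ) * Real.pi + Real.pi / 2)
        = θ - Real.pi / 2 - (k : ℝ) * Real.pi := by ring
    rw [he] at h
    exact h
  have hA1 : |aF θ| ≤ 1 := by rw [aF]; exact Real.abs_sin_le_one _
  have hB1 : |bF θ| ≤ 1 := by rw [bF]; exact Real.abs_sin_le_one _
  exact le_ciInf fun Y => keyY hA hB hS hA1 hB1 hδ0 Y
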